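/- The system of functional equations h(σ^{n−1}(x)) = 2^{−i_n} · (1 − h(σ^n(x))), required to hold for every x = π_P(i_1, i_2, …) in [0,1) and every n ≥ 1, has a unique solution in the class of bounded functions h : [0,1) → ℝ, namely h(x) = M_π(x)/2 = 2^{−i_1} − 2^{−i_1−i_2} + ⋯ + (−1)^{n−1} 2^{−i_1−i_2−⋯−i_n} + ⋯. -/

import Mathlib

/-!
Since `σ` acts on `π_P(i)` as the shift of the digit sequence `i`, the system of functional
equations amounts to the single relation `h(π_P(i)) = 2^{-i₁} (1 - h(π_P(shift i)))`.
The function `M_π/2` satisfies it (split off the first term of its series), and it is a well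
defined function on `[0,1)` because `π_P(i)` lies in `[p̂_{i₁}, p̂_{i₁+1})`, which makes `π_P`
injective on digit sequences. The difference of two bounded solutions gets multiplied by
`-2^{-i₁}`, of modulus at most `1/2`, at each shift, so it is bounded by `C · 2^{-n}` for every
`n`, hence zero.
-/

open scoped BigOperators
open MeasureTheory

/-- `p̂_j = p_1 + ⋯ + p_{j-1}` (so `p̂_1 = 0`). -/
noncomputable def phat (p : ℕ → ℝ) (j : ℕ) : ℝ := ∑ m ∈ Finset.Ico 1 j, p m

/-- The expansion `π_P((i_k)) = p̂_{i_1} + ∑_{k≥1} p̂_{i_{k+1}} · p_{i_1} ⋯ p_{i_k}`,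
with the digit sequence `i : ℕ → ℕ` indexed from 0 (so `i 0 = i_1`). -/
noncomputable def piP (p : ℕ → ℝ) (i : ℕ → ℕ) : ℝ :=
  phat p (i 0) + ∑' k : ℕ, phat p (i (k + 1)) * ∏ m ∈ Finset.range (k + 1), p (i m)

/-- The value `∑_{k≥1} (−1)^{k−1} 2^{1−(i_1+⋯+i_k)}` of the Minkowski type function
on the point with digit sequence `i` (indexed from 0). -/
noncomputable def Mseq (i : ℕ → ℕ) : ℝ :=
  ∑' k : ℕ, (-1 : ℝ) ^ k * (2 : ℝ) ^ ((1 : ℤ) - ∑ m ∈ Finset.range (k + 1), (i m : ℤ))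

open Filter Topology

section Contraction

variable {α : Type*} {S : Set α} {T : α → α}

theorem eqOn_zero_of_abs_le_half_abs_comp {d : α → ℝ} {B : ℝ} (hT : Set.MapsTo T S S)
    (hB : ∀ x ∈ S, |d x| ≤ B) (hd : ∀ x ∈ S, |d x| ≤ |d (T x)| / 2) : Set.EqOn d 0 S := by
  have hpow : ∀ n : ℕ, ∀ x ∈ S, |d x| ≤ B * (1 / 2) ^ n := by
    intro n
    induction n with
    | zero => simpa using hB
    | succ n ih =>
      intro x hx
      rw [pow_succ]
      linarith [hd x hx, ih (T x) (hT hx)]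
  have hlim : Tendsto (fun n : ℕ => B * (1 / 2 : ℝ) ^ n) atTop (𝓝 0) := by
    simpa using (tendsto_pow_atTop_nhds_zero_of_lt_one (by norm_num : (0 : ℝ) ≤ 1 / 2)
      (by norm_num)).const_mul B
  intro x hx
  exact abs_nonpos_iff.1 (ge_of_tendsto' hlim fun n => hpow n x hx)

theorem eqOn_of_eq_mul_one_sub_comp {c f g : α → ℝ} {B₁ B₂ : ℝ} (hT : Set.MapsTo T S S)
    (hc : ∀ x ∈ S, |c x| ≤ 1 / 2)
    (hf : ∀ x ∈ S, f x = c x * (1 - f (T x))) (hg : ∀ x ∈ S, g x = c x * (1 - g (T x)))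
    (hf_bdd : ∀ x ∈ S, |f x| ≤ B₁) (hg_bdd : ∀ x ∈ S, |g x| ≤ B₂) : Set.EqOn f g S := by
  refine fun x hx => sub_eq_zero.1 (eqOn_zero_of_abs_le_half_abs_comp (d := f - g)
    (B := B₁ + B₂) hT (fun x hx => ?_) (fun x hx => ?_) hx)
  · exact (abs_sub _ _).trans (add_le_add (hf_bdd x hx) (hg_bdd x hx))
  · have hdiff : f x - g x = -c x * (f (T x) - g (T x)) := by
      rw [hf x hx, hg x hx]
      ring
    simp only [Pi.sub_apply, hdiff, abs_mul, abs_neg]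
    nlinarith [hc x hx, abs_nonneg (f (T x) - g (T x))]

end Contraction

theorem abs_two_zpow_neg_le_half {n : ℕ} (hn : 1 ≤ n) : |(2 : ℝ) ^ (-(n : ℤ))| ≤ 1 / 2 := by
  rw [abs_of_pos (zpow_pos two_pos _), one_div, ← zpow_neg_one]
  exact zpow_le_zpow_right₀ one_le_two (by omega)

section Expansion

variable {p : ℕ → ℝ} {i j : ℕ → ℕ}

theorem phat_succ {n : ℕ} (hn : 1 ≤ n) : phat p (n + 1) = phat p n + p n :=
  Finset.sum_Ico_succ_top hn _

theorem phat_nonneg (hp : ∀ j, 1 ≤ j → 0 < p j) (n : ℕ) : 0 ≤ phat p n :=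
  Finset.sum_nonneg fun m hm => (hp m (Finset.mem_Ico.1 hm).1).le

theorem phat_mono (hp : ∀ j, 1 ≤ j → 0 < p j) : Monotone (phat p) := fun _ _ h =>
  Finset.sum_le_sum_of_subset_of_nonneg (Finset.Ico_subset_Ico le_rfl h)
    fun m hm _ => (hp m (Finset.mem_Ico.1 hm).1).le

theorem phat_le_one (hp : ∀ j, 1 ≤ j → 0 < p j) (hpsum : ∑' j : ℕ, p (j + 1) = 1) (n : ℕ) :
    phat p n ≤ 1 := by
  have hs : Summable fun j => p (j + 1) := by
    by_contra h
    simp [tsum_eq_zero_of_not_summable h] at hpsum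
  calc phat p n = ∑ k ∈ Finset.range (n - 1), p (k + 1) := by
        simp only [phat, Finset.sum_Ico_eq_sum_range, add_comm 1]
    _ ≤ ∑' k, p (k + 1) := hs.sum_le_tsum _ fun k _ => (hp _ k.succ_pos).le
    _ = 1 := hpsum

theorem phat_lt_one (hp : ∀ j, 1 ≤ j → 0 < p j) (hpsum : ∑' j : ℕ, p (j + 1) = 1) (n : ℕ) :
    phat p n < 1 :=
  calc phat p n ≤ phat p (n + 1) := phat_mono hp n.le_succ
    _ < phat p (n + 1) + p (n + 1) := lt_add_of_pos_right _ (hp _ n.succ_pos)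
    _ = phat p (n + 2) := (phat_succ n.succ_pos).symm
    _ ≤ 1 := phat_le_one hp hpsum _

noncomputable def piPTerm (p : ℕ → ℝ) (i : ℕ → ℕ) (k : ℕ) : ℝ :=
  phat p (i (k + 1)) * ∏ m ∈ Finset.range (k + 1), p (i m)

theorem piP_eq_phat_add_tsum : piP p i = phat p (i 0) + ∑' k, piPTerm p i k := rfl

theorem piPTerm_zero : piPTerm p i 0 = p (i 0) * phat p (i 1) := by
  simp [piPTerm, mul_comm]

theorem piPTerm_succ (k : ℕ) :
    piPTerm p i (k + 1) = p (i 0) * piPTerm p (fun k => i (k + 1)) k := by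
  simp only [piPTerm]
  rw [Finset.prod_range_succ' _ (k + 1)]
  ring

theorem piPTerm_nonneg (hp : ∀ j, 1 ≤ j → 0 < p j) (hi : ∀ k, 1 ≤ i k) (k : ℕ) :
    0 ≤ piPTerm p i k :=
  mul_nonneg (phat_nonneg hp _) (Finset.prod_nonneg fun m _ => (hp _ (hi m)).le)

theorem phat_add_sum_piPTerm_le (hp : ∀ j, 1 ≤ j → 0 < p j)
    (hpsum : ∑' j : ℕ, p (j + 1) = 1) (n : ℕ) :
    ∀ {i : ℕ → ℕ}, (∀ k, 1 ≤ i k) →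
      phat p (i 0) + ∑ k ∈ Finset.range n, piPTerm p i k ≤ phat p (i 0 + 1) := by
  induction n with
  | zero =>
    intro i _
    simpa using phat_mono hp (i 0).le_succ
  | succ n ih =>
    intro i hi
    have htail := (ih fun k => hi (k + 1)).trans (phat_le_one hp hpsum _)
    have hscaled := mul_le_mul_of_nonneg_left htail (hp _ (hi 0)).le
    rw [Finset.sum_range_succ', piPTerm_zero, phat_succ (hi 0)]
    simp only [piPTerm_succ, ← Finset.mul_sum] at hscaled ⊢
    linarith

theorem summable_piPTerm (hp : ∀ j, 1 ≤ j → 0 < p j) (hpsum : ∑' j : ℕ, p (j + 1) = 1)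
    (hi : ∀ k, 1 ≤ i k) : Summable (piPTerm p i) :=
  summable_of_sum_range_le (piPTerm_nonneg hp hi) fun n => by
    linarith [phat_add_sum_piPTerm_le hp hpsum n hi, phat_le_one hp hpsum (i 0 + 1),
      phat_nonneg hp (i 0)]

theorem piP_eq_phat_add_mul (hp : ∀ j, 1 ≤ j → 0 < p j) (hpsum : ∑' j : ℕ, p (j + 1) = 1)
    (hi : ∀ k, 1 ≤ i k) : piP p i = phat p (i 0) + p (i 0) * piP p (fun k => i (k + 1)) := by
  rw [piP_eq_phat_add_tsum, (summable_piPTerm hp hpsum hi).tsum_eq_zero_add, piPTerm_zero]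
  simp only [piPTerm_succ, tsum_mul_left, piP_eq_phat_add_tsum (i := fun k => i (k + 1))]
  ring

theorem phat_le_piP (hp : ∀ j, 1 ≤ j → 0 < p j) (hi : ∀ k, 1 ≤ i k) : phat p (i 0) ≤ piP p i :=
  le_add_of_nonneg_right (tsum_nonneg (piPTerm_nonneg hp hi))

theorem piP_le_phat_succ (hp : ∀ j, 1 ≤ j → 0 < p j) (hpsum : ∑' j : ℕ, p (j + 1) = 1)
    (hi : ∀ k, 1 ≤ i k) : piP p i ≤ phat p (i 0 + 1) := by
  have := (summable_piPTerm hp hpsum hi).tsum_le_of_sum_range_le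
    (c := phat p (i 0 + 1) - phat p (i 0)) fun n => by
    linarith [phat_add_sum_piPTerm_le hp hpsum n hi]
  rw [piP_eq_phat_add_tsum]
  linarith

theorem piP_lt_phat_succ (hp : ∀ j, 1 ≤ j → 0 < p j) (hpsum : ∑' j : ℕ, p (j + 1) = 1)
    (hi : ∀ k, 1 ≤ i k) : piP p i < phat p (i 0 + 1) := by
  have htail : piP p (fun k => i (k + 1)) < 1 :=
    (piP_le_phat_succ hp hpsum fun k => hi (k + 1)).trans_lt (phat_lt_one hp hpsum _)
  rw [piP_eq_phat_add_mul hp hpsum hi, phat_succ (hi 0)]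
  exact add_lt_add_right (mul_lt_of_lt_one_right (hp _ (hi 0)) htail) _

theorem piP_mem_Ico (hp : ∀ j, 1 ≤ j → 0 < p j) (hpsum : ∑' j : ℕ, p (j + 1) = 1)
    (hi : ∀ k, 1 ≤ i k) : piP p i ∈ Set.Ico (0 : ℝ) 1 :=
  ⟨(phat_nonneg hp _).trans (phat_le_piP hp hi),
    (piP_lt_phat_succ hp hpsum hi).trans_le (phat_le_one hp hpsum _)⟩

theorem head_eq_of_piP_eq (hp : ∀ j, 1 ≤ j → 0 < p j) (hpsum : ∑' j : ℕ, p (j + 1) = 1)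
    (hi : ∀ k, 1 ≤ i k) (hj : ∀ k, 1 ≤ j k) (h : piP p i = piP p j) : i 0 = j 0 := by
  have hlt : ∀ {i j : ℕ → ℕ}, (∀ k, 1 ≤ i k) → (∀ k, 1 ≤ j k) → i 0 < j 0 → piP p i < piP p j :=
    fun hi hj hij => calc
      _ < phat p (_ + 1) := piP_lt_phat_succ hp hpsum hi
      _ ≤ phat p _ := phat_mono hp hij
      _ ≤ piP p _ := phat_le_piP hp hj
  rcases lt_trichotomy (i 0) (j 0) with hij | hij | hij
  · exact absurd h (hlt hi hj hij).ne
  · exact hij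
  · exact absurd h (hlt hj hi hij).ne'

theorem eq_of_piP_eq (hp : ∀ j, 1 ≤ j → 0 < p j) (hpsum : ∑' j : ℕ, p (j + 1) = 1)
    (hi : ∀ k, 1 ≤ i k) (hj : ∀ k, 1 ≤ j k) (h : piP p i = piP p j) : i = j := by
  funext n
  induction n generalizing i j with
  | zero => exact head_eq_of_piP_eq hp hpsum hi hj h
  | succ n ih =>
    have h0 := head_eq_of_piP_eq hp hpsum hi hj h
    rw [piP_eq_phat_add_mul hp hpsum hi, piP_eq_phat_add_mul hp hpsum hj, h0] at h
    exact ih (fun k => hi (k + 1)) (fun k => hj (k + 1))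
      (mul_left_cancel₀ (hp _ (hj 0)).ne' (add_left_cancel h))

end Expansion

section Minkowski

variable {i : ℕ → ℕ}

noncomputable def minkowskiTerm (i : ℕ → ℕ) (k : ℕ) : ℝ :=
  (-1 : ℝ) ^ k * (2 : ℝ) ^ ((1 : ℤ) - ∑ m ∈ Finset.range (k + 1), (i m : ℤ))

theorem Mseq_eq_tsum : Mseq i = ∑' k, minkowskiTerm i k := rfl

theorem abs_minkowskiTerm_le (hi : ∀ k, 1 ≤ i k) (k : ℕ) :
    |minkowskiTerm i k| ≤ (1 / 2 : ℝ) ^ k := by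
  have hS : (k : ℤ) + 1 ≤ ∑ m ∈ Finset.range (k + 1), (i m : ℤ) := by
    simpa using Finset.card_nsmul_le_sum (Finset.range (k + 1)) (fun m => (i m : ℤ)) 1
      fun m _ => by exact_mod_cast hi m
  rw [minkowskiTerm, abs_mul, abs_pow, abs_neg, abs_one, one_pow, one_mul,
    abs_of_pos (zpow_pos two_pos _), one_div, inv_pow, ← zpow_natCast, ← zpow_neg]
  exact zpow_le_zpow_right₀ one_le_two (by omega)

theorem minkowskiTerm_succ (k : ℕ) :
    minkowskiTerm i (k + 1) = -(2 : ℝ) ^ (-(i 0 : ℤ)) * minkowskiTerm (fun k => i (k + 1)) k := by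
  simp only [minkowskiTerm]
  rw [Finset.sum_range_succ' _ (k + 1), pow_succ,
    show (1 : ℤ) - (∑ m ∈ Finset.range (k + 1), (i (m + 1) : ℤ) + i 0)
      = -(i 0 : ℤ) + (1 - ∑ m ∈ Finset.range (k + 1), (i (m + 1) : ℤ)) by ring,
    zpow_add₀ two_ne_zero]
  ring

theorem abs_Mseq_div_two_le_one (hi : ∀ k, 1 ≤ i k) : |Mseq i / 2| ≤ 1 := by
  have := tsum_of_norm_bounded (f := minkowskiTerm i) hasSum_geometric_two (abs_minkowskiTerm_le hi)
  rw [abs_div, abs_two]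
  rw [Real.norm_eq_abs, ← Mseq_eq_tsum] at this
  linarith

theorem Mseq_div_two_eq (hi : ∀ k, 1 ≤ i k) :
    Mseq i / 2 = (2 : ℝ) ^ (-(i 0 : ℤ)) * (1 - Mseq (fun k => i (k + 1)) / 2) := by
  have hs : Summable (minkowskiTerm i) :=
    .of_norm_bounded summable_geometric_two (abs_minkowskiTerm_le hi)
  have h0 : minkowskiTerm i 0 = 2 * (2 : ℝ) ^ (-(i 0 : ℤ)) := by
    rw [minkowskiTerm, zero_add, Finset.sum_range_one, pow_zero, one_mul, sub_eq_add_neg,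
      zpow_add₀ two_ne_zero, zpow_one]
  rw [Mseq_eq_tsum, hs.tsum_eq_zero_add, h0]
  simp only [minkowskiTerm_succ, tsum_mul_left, ← Mseq_eq_tsum]
  ring

end Minkowski

section Shift

variable {p : ℕ → ℝ} {σ : ℝ → ℝ}

theorem iterate_piP
    (hσ : ∀ i : ℕ → ℕ, (∀ k, 1 ≤ i k) → σ (piP p i) = piP p (fun k => i (k + 1)))
    {i : ℕ → ℕ} (hi : ∀ k, 1 ≤ i k) (m : ℕ) :
    σ^[m] (piP p i) = piP p (fun k => i (m + k)) := by
  induction m with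
  | zero => simp
  | succ m ih =>
    rw [Function.iterate_succ_apply', ih, hσ _ fun k => hi _]
    simp only [Nat.add_right_comm m 1]
    rfl

theorem iterate_system_iff_one_step
    (hσ : ∀ i : ℕ → ℕ, (∀ k, 1 ≤ i k) → σ (piP p i) = piP p (fun k => i (k + 1)))
    (h : ℝ → ℝ) :
    (∀ i : ℕ → ℕ, (∀ k, 1 ≤ i k) → ∀ n : ℕ, 1 ≤ n →
        h (σ^[n - 1] (piP p i)) = (2 : ℝ) ^ (-(i (n - 1) : ℤ)) * (1 - h (σ^[n] (piP p i)))) ↔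
      ∀ i : ℕ → ℕ, (∀ k, 1 ≤ i k) →
        h (piP p i) = (2 : ℝ) ^ (-(i 0 : ℤ)) * (1 - h (piP p (fun k => i (k + 1)))) := by
  constructor
  · intro hsys i hi
    simpa [hσ i hi] using hsys i hi 1 le_rfl
  · intro hstep i hi n hn
    obtain ⟨m, rfl⟩ := Nat.exists_eq_add_of_le' hn
    rw [Nat.add_sub_cancel, Function.iterate_succ_apply', iterate_piP hσ hi, hσ _ fun k => hi _]
    exact hstep _ fun k => hi _

end Shift

theorem exists_abs_le_one_forall_eq_Mseq_div_two {p : ℕ → ℝ} (hp : ∀ j, 1 ≤ j → 0 < p j)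
    (hpsum : ∑' j : ℕ, p (j + 1) = 1) :
    ∃ H : ℝ → ℝ, (∀ x, |H x| ≤ 1) ∧ ∀ i : ℕ → ℕ, (∀ k, 1 ≤ i k) → H (piP p i) = Mseq i / 2 := by
  let e : {i : ℕ → ℕ // ∀ k, 1 ≤ i k} → ℝ := fun i => piP p i
  have he : Function.Injective e := fun i j h => Subtype.ext (eq_of_piP_eq hp hpsum i.2 j.2 h)
  refine ⟨Function.extend e (fun i => Mseq i / 2) 0, fun x => ?_,
    fun i hi => he.extend_apply _ _ ⟨i, hi⟩⟩
  by_cases hx : ∃ i, e i = x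
  · obtain ⟨i, rfl⟩ := hx
    rw [he.extend_apply]
    exact abs_Mseq_div_two_le_one i.2
  · simp [Function.extend_apply' _ _ _ hx]

/-- The system `h(σ^{n−1}(x)) = 2^{−i_n}(1 − h(σ^n(x)))` has a unique solution in the
class of bounded functions on `[0,1)`, namely `h(x) = M_π(x)/2`, i.e. the function whose
value at `x = π_P(i_1, i_2, …)` is `∑_{k≥1} (−1)^{k−1} 2^{−(i_1+⋯+i_k)} = Mseq(i)/2`. -/
theorem stmt14 (p : ℕ → ℝ) (hp : ∀ j, 1 ≤ j → 0 < p j ∧ p j < 1)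
    (hpsum : ∑' j : ℕ, p (j + 1) = 1)
    (σ : ℝ → ℝ)
    (hσ : ∀ i : ℕ → ℕ, (∀ k, 1 ≤ i k) → σ (piP p i) = piP p (fun k => i (k + 1))) :
    (∃ h : ℝ → ℝ,
      (∃ C : ℝ, ∀ x ∈ Set.Ico (0 : ℝ) 1, |h x| ≤ C) ∧
      (∀ i : ℕ → ℕ, (∀ k, 1 ≤ i k) → ∀ n : ℕ, 1 ≤ n →
        h (σ^[n - 1] (piP p i)) =
          (2 : ℝ) ^ (-(i (n - 1) : ℤ)) * (1 - h (σ^[n] (piP p i)))) ∧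
      (∀ i : ℕ → ℕ, (∀ k, 1 ≤ i k) → h (piP p i) = Mseq i / 2)) ∧
    (∀ h : ℝ → ℝ,
      (∃ C : ℝ, ∀ x ∈ Set.Ico (0 : ℝ) 1, |h x| ≤ C) →
      (∀ i : ℕ → ℕ, (∀ k, 1 ≤ i k) → ∀ n : ℕ, 1 ≤ n →
        h (σ^[n - 1] (piP p i)) =
          (2 : ℝ) ^ (-(i (n - 1) : ℤ)) * (1 - h (σ^[n] (piP p i)))) →
      ∀ i : ℕ → ℕ, (∀ k, 1 ≤ i k) → h (piP p i) = Mseq i / 2) := by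
  have hpos : ∀ j, 1 ≤ j → 0 < p j := fun j hj => (hp j hj).1
  obtain ⟨H, hH_bdd, hH⟩ := exists_abs_le_one_forall_eq_Mseq_div_two hpos hpsum
  refine ⟨⟨H, ⟨1, fun x _ => hH_bdd x⟩, (iterate_system_iff_one_step hσ H).2 fun i hi => ?_, hH⟩,
    ?_⟩
  · rw [hH i hi, hH _ fun k => hi (k + 1)]
    exact Mseq_div_two_eq hi
  · rintro h ⟨C, hC⟩ hsys i hi
    exact eqOn_of_eq_mul_one_sub_comp (S := {i | ∀ k, 1 ≤ i k}) (T := fun i k => i (k + 1))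
      (c := fun i => (2 : ℝ) ^ (-(i 0 : ℤ))) (f := fun i => h (piP p i)) (g := fun i => Mseq i / 2)
      (fun i hi k => hi (k + 1)) (fun i hi => abs_two_zpow_neg_le_half (hi 0))
      ((iterate_system_iff_one_step hσ h).1 hsys) (fun i hi => Mseq_div_two_eq hi)
      (fun i hi => hC _ (piP_mem_Ico hpos hpsum hi)) (fun i hi => abs_Mseq_div_two_le_one hi) hi
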